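/- Let l be a prime power, A, B ⊆ F_l^n \ {0}, and H a uniformly random invertible matrix in F_l^{n×n}. If log_l |A| = n R_1 + o(n) and log_l |B| = n R_2 + o(n) as n → ∞ with R_1 + R_2 > 1, then P(A ∩ HB = ∅) → 0 as n → ∞, where HB = {Hx : x ∈ B}. -/

import Mathlib

/-!
Second moment method. For `H` uniform in `GL(V)` let `N(H) = #{b ∈ B | H b ∈ A}`, and write
`m = |V|`, `q = |F|`. Since `GL(V)` acts transitively on nonzero vectors and on linearly
independent pairs, `E N = |A||B|/(m - 1)`, and splitting the pairs `(b, b')` into dependent ones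
(at most `q` for each `b`) and independent ones gives
`E N² ≤ q|A||B|/(m - 1) + |A|²|B|²/((m - 1)(m - q))`. Chebyshev's inequality
`P(N = 0) ≤ E N² / (E N)² - 1` then bounds `P(A ∩ HB = ∅)` by `q(m - 1)/(|A||B|) + (q - 1)/(m - q)`.
For `m = qⁿ` and `log_q (|A||B|) = n(R₁ + R₂) + o(n)` both terms tend to `0`.
-/

open Finset MulAction Filter Topology

lemma card_filter_eq_zero_div_card_le {ι : Type*} (s : Finset ι) (N : ι → ℝ)
    (hN : ∑ i ∈ s, N i ≠ 0) :
    (#{i ∈ s | N i = 0} : ℝ) / #s ≤ #s * (∑ i ∈ s, N i ^ 2) / (∑ i ∈ s, N i) ^ 2 - 1 := by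
  set S := ∑ i ∈ s, N i
  set c : ℝ := (#s : ℝ)
  have hc : 0 < c := Nat.cast_pos.mpr (nonempty_of_sum_ne_zero hN).card_pos
  -- each `i` with `N i = 0` contributes `S ^ 2` to the variance sum
  have key : #{i ∈ s | N i = 0} * S ^ 2 ≤ c * (c * ∑ i ∈ s, N i ^ 2 - S ^ 2) :=
    calc #{i ∈ s | N i = 0} * S ^ 2 = ∑ i ∈ s with N i = 0, (c * N i - S) ^ 2 := by
          rw [sum_congr rfl fun i hi => by rw [(mem_filter.mp hi).2], sum_const, nsmul_eq_mul]
          ring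
      _ ≤ ∑ i ∈ s, (c * N i - S) ^ 2 :=
          sum_le_sum_of_subset_of_nonneg (filter_subset _ _) fun _ _ _ => sq_nonneg _
      _ = c * (c * ∑ i ∈ s, N i ^ 2 - S ^ 2) := by
          simp only [sub_sq, sum_add_distrib, sum_sub_distrib, mul_pow, ← mul_sum, ← sum_mul,
            sum_const, nsmul_eq_mul, mul_assoc]
          ring
  rw [div_le_iff₀ hc, show (c * (∑ i ∈ s, N i ^ 2) / S ^ 2 - 1) * c
    = c * (c * ∑ i ∈ s, N i ^ 2 - S ^ 2) / S ^ 2 by field_simp, le_div_iff₀ (by positivity)]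
  exact key

section GroupAction

variable {G X : Type*} [Group G] [MulAction G X] [Fintype G] [DecidableEq X]

lemma card_filter_smul_eq_mul_ncard_orbit {x y : X} (hy : y ∈ orbit G x) :
    #{g : G | g • x = y} * (orbit G x).ncard = Fintype.card G := by
  obtain ⟨h, rfl⟩ := hy
  have hfiber : #{g : G | g • x = h • x} = Nat.card (stabilizer G x) := by
    rw [← Fintype.card_subtype, ← Nat.card_eq_fintype_card]
    exact Nat.card_congr <| (Equiv.mulLeft h⁻¹).subtypeEquiv fun g => by
      simp [mem_stabilizer_iff, mul_smul, inv_smul_eq_iff]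
  rw [hfiber, ← index_stabilizer, Subgroup.card_mul_index, Nat.card_eq_fintype_card]

open scoped Classical in
lemma card_filter_smul_mem_mul_ncard_orbit (x : X) (S : Finset X) :
    #{g : G | g • x ∈ S} * (orbit G x).ncard
      = #{y ∈ S | y ∈ orbit G x} * Fintype.card G := by
  have hmaps : Set.MapsTo (· • x) (↑(univ.filter fun g : G => g • x ∈ S) : Set G)
      ↑(S.filter (· ∈ orbit G x)) :=
    fun g hg => by simpa using And.intro (by simpa using hg) (mem_orbit x g)
  rw [card_eq_sum_card_fiberwise hmaps, sum_mul, ← smul_eq_mul, ← sum_const]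
  refine sum_congr rfl fun y hy => ?_
  rw [mem_filter] at hy
  rw [filter_filter, ← card_filter_smul_eq_mul_ncard_orbit hy.2]
  exact congrArg (#· * _) (filter_congr fun g _ => and_iff_right_of_imp fun h => h ▸ hy.1)

end GroupAction

section GeneralLinear

variable {K V : Type*} [DivisionRing K] [AddCommGroup V] [Module K V]

instance LinearEquiv.finite [Finite V] : Finite (V ≃ₗ[K] V) :=
  Finite.of_injective (fun H : V ≃ₗ[K] V => (H : V → V)) DFunLike.coe_injective

lemma LinearIndependent.exists_linearEquiv_apply_eq {ι : Type*} [Finite ι] {v w : ι → V}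
    (hv : LinearIndependent K v) (hw : LinearIndependent K w) :
    ∃ H : V ≃ₗ[K] V, ∀ i, H (v i) = w i := by
  have : FiniteDimensional K (Submodule.span K (Set.range v)) :=
    FiniteDimensional.span_of_finite K (Set.finite_range v)
  obtain ⟨H, hH⟩ := Submodule.exists_linearEquiv_restrict_eq
    (hv.linearCombinationEquiv.symm ≪≫ₗ hw.linearCombinationEquiv)
  exact ⟨H, fun i => by simpa using (hH (hv.linearCombinationEquiv (Finsupp.single i 1))).symm⟩

lemma orbit_linearEquiv_eq_of_linearIndependent {ι : Type*} [Finite ι] {v : ι → V}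
    (hv : LinearIndependent K v) :
    orbit (V ≃ₗ[K] V) v = {w | LinearIndependent K w} := by
  ext w
  constructor
  · rintro ⟨H, rfl⟩
    exact hv.map' H.toLinearMap H.ker
  · intro hw
    obtain ⟨H, hH⟩ := hv.exists_linearEquiv_apply_eq hw
    exact ⟨H, funext hH⟩

lemma orbit_linearEquiv_eq_of_ne_zero {v : V} (hv : v ≠ 0) :
    orbit (V ≃ₗ[K] V) v = {w | w ≠ 0} := by
  ext w
  constructor
  · rintro ⟨H, rfl⟩
    simpa [LinearEquiv.smul_def] using hv
  · intro hw
    obtain ⟨H, hH⟩ := LinearIndependent.exists_linearEquiv_apply_eq (ι := Unit)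
      (v := fun _ => v) (w := fun _ => w) (linearIndependent_unique_iff (R := K).mpr hv)
      (linearIndependent_unique_iff (R := K).mpr hw)
    exact ⟨H, hH ()⟩

variable [Fintype K]

open scoped Classical in
lemma card_filter_not_linearIndependent_pair_le (B : Finset V) {b : V} (hb : b ≠ 0) :
    #{b' ∈ B | ¬LinearIndependent K ![b, b']} ≤ Fintype.card K :=
  calc _ ≤ #(univ.image (· • b)) := card_le_card fun b' hb' => by
        simpa [LinearIndependent.pair_iff' hb] using (mem_filter.mp hb').2
    _ ≤ Fintype.card K := card_image_le

variable [Fintype V]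

lemma Module.card_lt_card_of_one_lt_finrank (hV : 1 < Module.finrank K V) :
    Fintype.card K < Fintype.card V := by
  rw [Module.card_eq_pow_finrank (K := K) (V := V)]
  exact lt_self_pow₀ Fintype.one_lt_card hV

variable [DecidableEq V] [Fintype (V ≃ₗ[K] V)]

lemma card_filter_apply_mem {A : Finset V} (hA0 : 0 ∉ A) {b : V} (hb : b ≠ 0) :
    (#{H : V ≃ₗ[K] V | H b ∈ A} : ℝ)
      = #A * Fintype.card (V ≃ₗ[K] V) / (Fintype.card V - 1) := by
  classical
  have h := card_filter_smul_mem_mul_ncard_orbit (G := V ≃ₗ[K] V) b A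
  have hA : ∀ a ∈ A, a ∈ orbit (V ≃ₗ[K] V) b := fun a ha => by
    rw [orbit_linearEquiv_eq_of_ne_zero hb]
    exact ne_of_mem_of_not_mem ha hA0
  have hV : 1 < Fintype.card V := Fintype.one_lt_card_iff_nontrivial.mpr ⟨b, 0, hb⟩
  rw [filter_true_of_mem hA, orbit_linearEquiv_eq_of_ne_zero hb, ← Set.compl_singleton_eq,
    Set.ncard_compl, Set.ncard_singleton, Nat.card_eq_fintype_card] at h
  rw [eq_div_iff (sub_ne_zero.mpr (by exact_mod_cast hV.ne')), ← Nat.cast_one,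
    ← Nat.cast_sub hV.le]
  exact_mod_cast (by simpa [LinearEquiv.smul_def] using h)

lemma card_filter_apply_mem_and_apply_mem_le (A : Finset V) {b b' : V}
    (hbb' : LinearIndependent K ![b, b']) (hV : 2 ≤ Module.finrank K V) :
    (#{H : V ≃ₗ[K] V | H b ∈ A ∧ H b' ∈ A} : ℝ)
      ≤ #A ^ 2 * Fintype.card (V ≃ₗ[K] V)
        / ((Fintype.card V - 1) * (Fintype.card V - Fintype.card K)) := by
  classical
  have hKV := Module.card_lt_card_of_one_lt_finrank (K := K) (V := V) hV
  have h := card_filter_smul_mem_mul_ncard_orbit (G := V ≃ₗ[K] V) ![b, b']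
    (Fintype.piFinset fun _ => A)
  have horbit : (orbit (V ≃ₗ[K] V) ![b, b']).ncard
      = (Fintype.card V - 1) * (Fintype.card V - Fintype.card K) := by
    rw [orbit_linearEquiv_eq_of_linearIndependent hbb', ← Nat.card_coe_set_eq,
      Set.coe_ofPred, card_linearIndependent hV, Module.card_eq_pow_finrank (K := K) (V := V)]
    simp [Fin.prod_univ_two]
  have hfilter : #{H : V ≃ₗ[K] V | H b ∈ A ∧ H b' ∈ A}
      = #{H : V ≃ₗ[K] V | H • ![b, b'] ∈ Fintype.piFinset fun _ => A} :=
    congrArg card <| filter_congr fun H _ => by simp [Fin.forall_fin_two, LinearEquiv.smul_def]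
  have hle : #{H : V ≃ₗ[K] V | H b ∈ A ∧ H b' ∈ A}
      * ((Fintype.card V - 1) * (Fintype.card V - Fintype.card K))
      ≤ #A ^ 2 * Fintype.card (V ≃ₗ[K] V) := by
    rw [hfilter, ← horbit, h]
    calc _ ≤ #(Fintype.piFinset fun _ : Fin 2 => A) * Fintype.card (V ≃ₗ[K] V) := by
          gcongr; exact filter_subset _ _
      _ = #A ^ 2 * Fintype.card (V ≃ₗ[K] V) := by simp
  have hpos : (0 : ℝ) < (Fintype.card V - 1) * (Fintype.card V - Fintype.card K) := by
    have : (1 : ℝ) < Fintype.card K := by exact_mod_cast Fintype.one_lt_card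
    have : (Fintype.card K : ℝ) < Fintype.card V := by exact_mod_cast hKV
    nlinarith
  rw [le_div_iff₀ hpos, ← Nat.cast_one, ← Nat.cast_sub (by omega), ← Nat.cast_sub hKV.le]
  exact_mod_cast hle

def hitCount (A B : Finset V) (H : V ≃ₗ[K] V) : ℕ := #{b ∈ B | H b ∈ A}

variable {A B : Finset V}

lemma sum_hitCount (hA0 : 0 ∉ A) (hB0 : 0 ∉ B) :
    ∑ H : V ≃ₗ[K] V, (hitCount A B H : ℝ)
      = #B * (#A * Fintype.card (V ≃ₗ[K] V) / (Fintype.card V - 1)) := by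
  simp only [hitCount, card_filter, Nat.cast_sum, Nat.cast_ite, Nat.cast_one, Nat.cast_zero]
  rw [sum_comm, sum_congr rfl fun b hb => ?_, sum_const, nsmul_eq_mul]
  rw [sum_boole]
  exact card_filter_apply_mem hA0 (ne_of_mem_of_not_mem hb hB0)

lemma sum_card_filter_apply_mem_and_apply_mem_le (hA0 : 0 ∉ A) (hV : 2 ≤ Module.finrank K V)
    (B : Finset V) {b : V} (hb : b ≠ 0) :
    ∑ b' ∈ B, (#{H : V ≃ₗ[K] V | H b ∈ A ∧ H b' ∈ A} : ℝ)
      ≤ Fintype.card K * (#A * Fintype.card (V ≃ₗ[K] V) / (Fintype.card V - 1))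
        + #B * (#A ^ 2 * Fintype.card (V ≃ₗ[K] V)
          / ((Fintype.card V - 1) * (Fintype.card V - Fintype.card K))) := by
  classical
  set u := #A * (Fintype.card (V ≃ₗ[K] V) : ℝ) / (Fintype.card V - 1)
  set w := #A ^ 2 * (Fintype.card (V ≃ₗ[K] V) : ℝ)
    / ((Fintype.card V - 1) * (Fintype.card V - Fintype.card K))
  have hq : (1 : ℝ) < Fintype.card K := by exact_mod_cast Fintype.one_lt_card
  have hqm : (Fintype.card K : ℝ) < Fintype.card V := by
    exact_mod_cast Module.card_lt_card_of_one_lt_finrank hV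
  have hu : 0 ≤ u := div_nonneg (by positivity) (by linarith)
  have hw : 0 ≤ w := div_nonneg (by positivity) (mul_nonneg (by linarith) (by linarith))
  rw [← sum_filter_not_add_sum_filter B (fun b' => LinearIndependent K ![b, b'])]
  gcongr
  · calc _ ≤ ∑ b' ∈ B with ¬LinearIndependent K ![b, b'], u :=
          sum_le_sum fun b' _ => le_of_le_of_eq
            (by exact_mod_cast card_le_card fun H => by simp +contextual)
            (card_filter_apply_mem hA0 hb)
      _ ≤ _ := by
          rw [sum_const, nsmul_eq_mul]
          exact mul_le_mul_of_nonneg_right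
            (by exact_mod_cast card_filter_not_linearIndependent_pair_le B hb) hu
  · calc _ ≤ ∑ b' ∈ B with LinearIndependent K ![b, b'], w :=
          sum_le_sum fun b' hb' =>
            card_filter_apply_mem_and_apply_mem_le A (mem_filter.mp hb').2 hV
      _ ≤ _ := by
          rw [sum_const, nsmul_eq_mul]
          exact mul_le_mul_of_nonneg_right (by exact_mod_cast card_filter_le _ _) hw

lemma sum_hitCount_sq_le (hA0 : 0 ∉ A) (hB0 : 0 ∉ B) (hV : 2 ≤ Module.finrank K V) :
    ∑ H : V ≃ₗ[K] V, (hitCount A B H : ℝ) ^ 2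
      ≤ #B * (Fintype.card K * (#A * Fintype.card (V ≃ₗ[K] V) / (Fintype.card V - 1))
        + #B * (#A ^ 2 * Fintype.card (V ≃ₗ[K] V)
          / ((Fintype.card V - 1) * (Fintype.card V - Fintype.card K)))) := by
  have hsq : ∀ H : V ≃ₗ[K] V, (hitCount A B H : ℝ) ^ 2
      = ∑ b ∈ B, ∑ b' ∈ B, if H b ∈ A ∧ H b' ∈ A then 1 else 0 := fun H => by
    simp only [hitCount, card_filter, Nat.cast_sum, Nat.cast_ite, Nat.cast_one, Nat.cast_zero,
      sq, sum_mul_sum, ite_zero_mul_ite_zero, mul_one]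
  rw [sum_congr rfl fun H _ => hsq H, sum_comm, ← nsmul_eq_mul]
  refine sum_le_card_nsmul B _ _ fun b hb => ?_
  rw [sum_comm]
  simp only [sum_boole]
  exact sum_card_filter_apply_mem_and_apply_mem_le hA0 hV B (ne_of_mem_of_not_mem hb hB0)

theorem card_forall_apply_notMem_div_card_le (hA0 : 0 ∉ A) (hB0 : 0 ∉ B) (hA : A.Nonempty)
    (hB : B.Nonempty) (hV : 2 ≤ Module.finrank K V) :
    (#{H : V ≃ₗ[K] V | ∀ b ∈ B, H b ∉ A} : ℝ) / Fintype.card (V ≃ₗ[K] V)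
      ≤ Fintype.card K * (Fintype.card V - 1) / (#A * #B)
        + (Fintype.card K - 1) / (Fintype.card V - Fintype.card K) := by
  have hq : (1 : ℝ) < Fintype.card K := by exact_mod_cast Fintype.one_lt_card
  have hqm : (Fintype.card K : ℝ) < Fintype.card V := by
    exact_mod_cast Module.card_lt_card_of_one_lt_finrank hV
  have hα : (0 : ℝ) < #A := by exact_mod_cast hA.card_pos
  have hβ : (0 : ℝ) < #B := by exact_mod_cast hB.card_pos
  have hg : (0 : ℝ) < Fintype.card (V ≃ₗ[K] V) := by exact_mod_cast Fintype.card_pos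
  have hZ : #{H : V ≃ₗ[K] V | ∀ b ∈ B, H b ∉ A}
      = #{H : V ≃ₗ[K] V | (hitCount A B H : ℝ) = 0} :=
    congrArg card <| filter_congr fun H _ => by simp [hitCount, filter_eq_empty_iff]
  have hS1 : ∑ H : V ≃ₗ[K] V, (hitCount A B H : ℝ) ≠ 0 := by
    rw [sum_hitCount hA0 hB0]
    exact (mul_pos hβ (div_pos (mul_pos hα hg) (by linarith))).ne'
  have hm1 : (Fintype.card V : ℝ) - 1 ≠ 0 := by linarith
  have hmq : (Fintype.card V : ℝ) - Fintype.card K ≠ 0 := by linarith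
  set g : ℝ := (Fintype.card (V ≃ₗ[K] V) : ℝ)
  set u := #A * g / (Fintype.card V - 1)
  set w := #A ^ 2 * g / ((Fintype.card V - 1) * (Fintype.card V - Fintype.card K))
  calc _ ≤ Fintype.card (V ≃ₗ[K] V) * (∑ H : V ≃ₗ[K] V, (hitCount A B H : ℝ) ^ 2)
        / (∑ H : V ≃ₗ[K] V, (hitCount A B H : ℝ)) ^ 2 - 1 := by
        rw [hZ, ← card_univ]
        exact card_filter_eq_zero_div_card_le univ _ hS1
    _ ≤ g * (#B * (Fintype.card K * u + #B * w)) / (#B * u) ^ 2 - 1 := by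
        rw [sum_hitCount hA0 hB0]
        gcongr
        exact sum_hitCount_sq_le hA0 hB0 hV
    _ = _ := by
        simp only [u, w]
        field_simp
        ring

end GeneralLinear

lemma tendsto_atTop_of_tendsto_div_natCast {f : ℕ → ℝ} {c : ℝ} (hc : 0 < c)
    (hf : Tendsto (fun n => f n / n) atTop (𝓝 c)) : Tendsto f atTop atTop :=
  (hf.pos_mul_atTop hc tendsto_natCast_atTop_atTop).congr' <| by
    filter_upwards [eventually_ne_atTop 0] with n hn
    field_simp

lemma logb_natCard_le {F : Type*} [Fintype F] {n : ℕ} (s : Set (Fin n → F)) :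
    Real.logb (Fintype.card F) (Nat.card s) ≤ n := by
  rcases (Nat.card s).eq_zero_or_pos with h | h
  · simp [h]
  rcases le_or_gt (Fintype.card F) 1 with hF | hF
  · interval_cases Fintype.card F <;> simp
  · rw [Real.logb_le_iff_le_rpow (by exact_mod_cast hF) (by exact_mod_cast h), Real.rpow_natCast]
    exact_mod_cast (Set.ncard_le_card s).trans_eq (by simp)

lemma div_mul_le_rpow_neg_logb {q x y : ℝ} (n : ℕ) (hq : 1 < q) (hx : 0 < x) (hy : 0 < y) :
    q * (q ^ n - 1) / (x * y) ≤ q ^ (-(Real.logb q x + Real.logb q y - (n + 1))) := by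
  have hq0 : 0 < q := by linarith
  rw [Real.rpow_neg hq0.le, Real.rpow_sub hq0, Real.rpow_add hq0, Real.rpow_logb hq0 hq.ne' hx,
    Real.rpow_logb hq0 hq.ne' hy, inv_div, Real.rpow_add_one hq0.ne', Real.rpow_natCast]
  gcongr ?_ / _
  nlinarith [one_le_pow₀ (n := n) hq.le]

lemma Set.nonempty_of_lt_logb_natCard_add {F : Type*} [Fintype F] {n : ℕ}
    {A B : Set (Fin n → F)}
    (h : n < Real.logb (Fintype.card F) (Nat.card A) + Real.logb (Fintype.card F) (Nat.card B)) :
    A.Nonempty := by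
  by_contra hA
  rw [Set.not_nonempty_iff_eq_empty.mp hA, Nat.card_coe_set_eq, Set.ncard_empty, Nat.cast_zero,
    Real.logb_zero, zero_add] at h
  exact h.not_ge (logb_natCard_le B)

lemma natCard_inter_image_eq_empty_div_le {F : Type*} [Field F] [Fintype F] {n : ℕ} (hn : 2 ≤ n)
    {A B : Set (Fin n → F)} (hA0 : 0 ∉ A) (hB0 : 0 ∉ B) (hA : A.Nonempty) (hB : B.Nonempty) :
    (Nat.card {H : (Fin n → F) ≃ₗ[F] (Fin n → F) // A ∩ (fun v => H v) '' B = ∅} : ℝ)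
        / Nat.card ((Fin n → F) ≃ₗ[F] (Fin n → F))
      ≤ (Fintype.card F : ℝ) ^ (-(Real.logb (Fintype.card F) (Nat.card A)
          + Real.logb (Fintype.card F) (Nat.card B) - (n + 1)))
        + (Fintype.card F - 1) / (Fintype.card F ^ n - Fintype.card F) := by
  classical
  let := Fintype.ofFinite ((Fin n → F) ≃ₗ[F] (Fin n → F))
  have hcard : Nat.card {H : (Fin n → F) ≃ₗ[F] (Fin n → F) // A ∩ (fun v => H v) '' B = ∅}
      = #{H : (Fin n → F) ≃ₗ[F] (Fin n → F) | ∀ b ∈ B.toFinset, H b ∉ A.toFinset} := by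
    rw [Nat.card_eq_fintype_card, Fintype.card_subtype]
    exact congrArg card <| filter_congr fun H _ => by
      simp only [Set.eq_empty_iff_forall_notMem, Set.mem_inter_iff, Set.mem_image,
        Set.mem_toFinset, not_and, not_exists]
      exact ⟨fun h b hb hHb => h _ hHb b hb rfl, fun h a ha b hb hba => h b hb (hba ▸ ha)⟩
  have h := card_forall_apply_notMem_div_card_le (K := F) (A := A.toFinset) (B := B.toFinset)
    (by simpa) (by simpa) (by simpa) (by simpa) (by simpa)
  rw [Nat.card_eq_fintype_card (α := (Fin n → F) ≃ₗ[F] (Fin n → F)), hcard,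
    Nat.card_eq_card_toFinset A, Nat.card_eq_card_toFinset B]
  refine h.trans ?_
  simp only [Fintype.card_fun, Fintype.card_fin, Nat.cast_pow]
  gcongr ?_ + _
  exact div_mul_le_rpow_neg_logb n (by exact_mod_cast Fintype.one_lt_card)
    (by exact_mod_cast (Set.toFinset_nonempty.mpr hA).card_pos)
    (by exact_mod_cast (Set.toFinset_nonempty.mpr hB).card_pos)

/-- asymptotic corollary of the intersection lemma: Let `F` be a finite
field of order `l`, and for each `n` let `A n, B n ⊆ F^n \ {0}` with
`log_l |A n| = n R₁ + o(n)` and `log_l |B n| = n R₂ + o(n)` where `R₁ + R₂ > 1`.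
For `H` uniformly random among invertible linear maps of `F^n`,
`P(A n ∩ H (B n) = ∅) → 0` as `n → ∞`. -/
theorem intersection_lemma_asymptotic
    (F : Type*) [Field F] [Fintype F] (l : ℕ) (hl : Fintype.card F = l)
    (R₁ R₂ : ℝ) (hR : 1 < R₁ + R₂)
    (A B : (n : ℕ) → Set (Fin n → F))
    (hA0 : ∀ n, (0 : Fin n → F) ∉ A n) (hB0 : ∀ n, (0 : Fin n → F) ∉ B n)
    (e₁ e₂ : ℕ → ℝ)
    (hA : ∀ n, Real.logb l (Nat.card (A n) : ℝ) = n * R₁ + e₁ n)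
    (hB : ∀ n, Real.logb l (Nat.card (B n) : ℝ) = n * R₂ + e₂ n)
    (he₁ : Filter.Tendsto (fun n => e₁ n / n) Filter.atTop (nhds 0))
    (he₂ : Filter.Tendsto (fun n => e₂ n / n) Filter.atTop (nhds 0)) :
    Filter.Tendsto
      (fun n =>
        (Nat.card {H : (Fin n → F) ≃ₗ[F] (Fin n → F) //
            A n ∩ (fun v => H v) '' (B n) = ∅} : ℝ) /
          (Nat.card ((Fin n → F) ≃ₗ[F] (Fin n → F)) : ℝ))
      Filter.atTop (nhds 0) := by
  subst hl
  have hl : (1 : ℝ) < Fintype.card F := by exact_mod_cast Fintype.one_lt_card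
  -- the excess `log_l (|A| |B|) - (n + 1)` grows linearly, with slope `R₁ + R₂ - 1`
  set s : ℕ → ℝ := fun n => Real.logb (Fintype.card F) (Nat.card (A n))
    + Real.logb (Fintype.card F) (Nat.card (B n)) - (n + 1)
  have hs : Tendsto s atTop atTop := by
    refine tendsto_atTop_of_tendsto_div_natCast (c := R₁ + R₂ - 1) (by linarith) ?_
    have hlim := ((he₁.add he₂).const_add (R₁ + R₂ - 1)).sub tendsto_one_div_atTop_nhds_zero_nat
    rw [add_zero, add_zero, sub_zero] at hlim
    refine hlim.congr' ?_
    filter_upwards [eventually_ne_atTop 0] with n hn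
    simp only [s, hA n, hB n]
    field_simp
    ring
  have hlim : Tendsto (fun n : ℕ => (Fintype.card F : ℝ) ^ (-s n)
      + (Fintype.card F - 1) / (Fintype.card F ^ n - Fintype.card F)) atTop (𝓝 0) := by
    simpa [sub_eq_add_neg] using ((tendsto_rpow_atBot_of_base_gt_one _ hl).comp
      (tendsto_neg_atTop_atBot.comp hs)).add (tendsto_const_nhds.div_atTop
        (tendsto_atTop_add_const_right _ _ (tendsto_pow_atTop_atTop_of_one_lt hl)))
  refine squeeze_zero' (Eventually.of_forall fun n => by positivity) ?_ hlim
  filter_upwards [hs.eventually_gt_atTop 0, eventually_ge_atTop 2] with n hsn hn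
  exact natCard_inter_image_eq_empty_div_le hn (hA0 n) (hB0 n)
    (Set.nonempty_of_lt_logb_natCard_add (by linarith))
    (Set.nonempty_of_lt_logb_natCard_add (B := A n) (by linarith))
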